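/- Let G = Γ(𝔽_p[x]/(x^{2b+1})), b ≥ 1, with partition V_1,…,V_{2b} by minimal degree, and W_i the space of functions supported on V_i with sum zero. For 0 ≤ α ≤ 1, every nonzero vector of W_i is an eigenvector of A_α(G) = αD(G)+(1−α)A(G), with eigenvalue α(p^i − 1) if 1 ≤ i ≤ b, and with eigenvalue α(p^i − 1) − 1 if b+1 ≤ i ≤ 2b. -/

import Mathlib

/-!
In `𝔽_p[x]/(x^c)` two nonzero elements multiply to zero exactly when their minimal degrees add
up to at least `c`. So adjacency in the zero-divisor graph depends only on the minimal degrees: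
`V_i` is a clique when `2i ≥ c` and an independent set otherwise, and between `V_i` and `V_j`
either all or no edges are present. Hence for `x` supported on `V_i` with zero sum, `A x = -x`
or `A x = 0` accordingly. A vertex `u ∈ V_i` is adjacent to the `p^i - 1` nonzero elements of
minimal degree `≥ c - i`, except itself when `2i ≥ c`, which gives `D x`.
-/

open Polynomial

noncomputable section

/-- The truncated polynomial ring `𝔽_p[x]/(x^c)`. -/
abbrev TPR (p c : ℕ) : Type := AdjoinRoot (X ^ c : (ZMod p)[X])

instance (p c : ℕ) [Fact p.Prime] : Finite (TPR p c) := by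
  have hb : PowerBasis (ZMod p) (TPR p c) :=
    AdjoinRoot.powerBasis (pow_ne_zero c Polynomial.X_ne_zero)
  have : Module.Finite (ZMod p) (TPR p c) := Module.Finite.of_basis hb.basis
  exact Module.finite_of_finite (ZMod p)

/-- The canonical representative (the unique representative of degree `< c`)
of an element of `𝔽_p[x]/(x^c)`. -/
def canon {p c : ℕ} (f : TPR p c) : (ZMod p)[X] :=
  Function.surjInv (AdjoinRoot.mk_surjective (g := (X ^ c : (ZMod p)[X]))) f %ₘ X ^ c

/-- The minimal degree: the least exponent with nonzero coefficient in the
canonical representative. -/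
def mindeg {p c : ℕ} (f : TPR p c) : ℕ := (canon f).natTrailingDegree

/-- The set of nonzero zero-divisors of `𝔽_p[x]/(x^c)`. -/
def zd (p c : ℕ) : Set (TPR p c) := {f | f ≠ 0 ∧ ∃ g, g ≠ 0 ∧ f * g = 0}

/-- The zero-divisor graph of `𝔽_p[x]/(x^c)`: vertices are the nonzero
zero-divisors, and `f ~ g` iff `f ≠ g` and `f * g = 0`. -/
def zdGraph (p c : ℕ) : SimpleGraph (zd p c) where
  Adj a b := a ≠ b ∧ (a : TPR p c) * (b : TPR p c) = 0
  symm := ⟨fun a b h => ⟨h.1.symm, by rw [mul_comm]; exact h.2⟩⟩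
  loopless := ⟨fun a h => h.1 rfl⟩

noncomputable instance (p c : ℕ) [Fact p.Prime] : Fintype (zd p c) := Fintype.ofFinite _

open scoped Classical in
/-- The adjacency matrix of the zero-divisor graph, over `ℝ`. -/
def adjM (p c : ℕ) : Matrix (zd p c) (zd p c) ℝ :=
  Matrix.of fun a b => if (zdGraph p c).Adj a b then 1 else 0

open scoped Classical in
/-- The diagonal degree matrix of the zero-divisor graph, over `ℝ`. -/
def degM (p c : ℕ) : Matrix (zd p c) (zd p c) ℝ :=
  Matrix.diagonal fun v => (((zdGraph p c).neighborSet v).ncard : ℝ)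

theorem SimpleGraph.adjMatrix_mulVec_apply_eq_ite_of_adj_iff {V ι α : Type*} [Fintype V]
    [DecidableEq V] [DecidableEq ι] [Ring α] (G : SimpleGraph V) [DecidableRel G.Adj]
    (φ : V → ι) (R : ι → ι → Prop) [DecidableRel R]
    (hG : ∀ u v, G.Adj u v ↔ u ≠ v ∧ R (φ u) (φ v)) {i : ι} {x : V → α}
    (hsupp : ∀ v, x v ≠ 0 → φ v = i) (hsum : ∑ v with φ v = i, x v = 0) (u : V) :
    (G.adjMatrix α).mulVec x u = if R (φ u) i then -x u else 0 := by
  rw [adjMatrix_mulVec_apply, ← Finset.sum_filter_of_ne fun v _ hv => hsupp v hv]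
  split_ifs with hR
  · have hfiber : {v ∈ G.neighborFinset u | φ v = i} = ({v | φ v = i} : Finset V).erase u := by
      ext v
      simp only [Finset.mem_filter, mem_neighborFinset, hG, Finset.mem_erase, Finset.mem_univ,
        true_and]
      constructor
      · rintro ⟨⟨huv, -⟩, hv⟩
        exact ⟨huv.symm, hv⟩
      · rintro ⟨hvu, hv⟩
        exact ⟨⟨hvu.symm, hv ▸ hR⟩, hv⟩
    rw [hfiber]
    by_cases hu : φ u = i
    · rw [Finset.sum_erase_eq_sub (by simpa using hu), hsum, zero_sub]
    · rw [Finset.erase_eq_of_notMem (by simpa using hu), hsum,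
        not_not.mp (mt (hsupp u) hu), neg_zero]
  · refine Finset.sum_eq_zero fun v hv => ?_
    simp only [Finset.mem_filter, mem_neighborFinset, hG] at hv
    exact absurd (hv.2 ▸ hv.1.2) hR

theorem X_pow_dvd_iff_le_natTrailingDegree {R : Type*} [Semiring R] {q : R[X]} (hq : q ≠ 0)
    (n : ℕ) : X ^ n ∣ q ↔ n ≤ q.natTrailingDegree := by
  rw [X_pow_dvd_iff]
  exact ⟨le_natTrailingDegree hq,
    fun h _ hd => coeff_eq_zero_of_lt_natTrailingDegree (hd.trans_le h)⟩

theorem degree_X_pow_mul_lt {R : Type*} [Semiring R] {m c : ℕ} (hm : m ≤ c) {q : R[X]}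
    (hq : q ∈ degreeLT R (c - m)) : (X ^ m * q).degree < (c : WithBot ℕ) := by
  rw [mem_degreeLT] at hq
  calc (X ^ m * q).degree ≤ (X ^ m : R[X]).degree + q.degree := degree_mul_le _ _
    _ ≤ m + q.degree := by gcongr; exact degree_X_pow_le m
    _ < m + (c - m : ℕ) := WithBot.add_lt_add_left WithBot.coe_ne_bot hq
    _ = c := by norm_cast; omega

section TruncatedPolynomial

variable {p c : ℕ}

theorem canon_eq_modByMonicHom (f : TPR p c) :
    canon f = AdjoinRoot.modByMonicHom (monic_X_pow c) f := by
  conv_rhs =>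
    rw [← Function.surjInv_eq (AdjoinRoot.mk_surjective (g := (X ^ c : (ZMod p)[X]))) f]
  rw [AdjoinRoot.modByMonicHom_mk]
  rfl

theorem mk_canon (f : TPR p c) : AdjoinRoot.mk (X ^ c) (canon f) = f := by
  rw [canon_eq_modByMonicHom]
  exact AdjoinRoot.mk_leftInverse (monic_X_pow c) f

theorem canon_mk (q : (ZMod p)[X]) : canon (AdjoinRoot.mk (X ^ c) q : TPR p c) = q %ₘ X ^ c := by
  rw [canon_eq_modByMonicHom, AdjoinRoot.modByMonicHom_mk]

theorem canon_eq_zero_iff {f : TPR p c} : canon f = 0 ↔ f = 0 := by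
  refine ⟨fun h => ?_, fun h => ?_⟩
  · rw [← mk_canon f, h, map_zero]
  · rw [canon_eq_modByMonicHom, h, map_zero]

variable [Fact p.Prime]

theorem degree_canon_lt (f : TPR p c) : (canon f).degree < c :=
  (degree_modByMonic_lt _ (monic_X_pow c)).trans_le (degree_X_pow_le c)

theorem natDegree_canon_lt {f : TPR p c} (hf : f ≠ 0) : (canon f).natDegree < c :=
  (natDegree_lt_iff_degree_lt (mt canon_eq_zero_iff.mp hf)).mpr (degree_canon_lt f)

theorem mindeg_lt {f : TPR p c} (hf : f ≠ 0) : mindeg f < c :=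
  (natTrailingDegree_le_natDegree _).trans_lt (natDegree_canon_lt hf)

theorem canon_mk_of_degree_lt {q : (ZMod p)[X]} (hq : q.degree < c) :
    canon (AdjoinRoot.mk (X ^ c) q : TPR p c) = q := by
  rw [canon_mk, modByMonic_eq_self_iff (monic_X_pow c), degree_X_pow]
  exact hq

theorem mul_eq_zero_iff_le_mindeg_add {f g : TPR p c} (hf : f ≠ 0) (hg : g ≠ 0) :
    f * g = 0 ↔ c ≤ mindeg f + mindeg g := by
  have hf' : canon f ≠ 0 := mt canon_eq_zero_iff.mp hf
  have hg' : canon g ≠ 0 := mt canon_eq_zero_iff.mp hg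
  have hfg : f * g = AdjoinRoot.mk (X ^ c) (canon f * canon g) := by
    rw [map_mul, mk_canon, mk_canon]
  rw [hfg, AdjoinRoot.mk_eq_zero,
    X_pow_dvd_iff_le_natTrailingDegree (mul_ne_zero hf' hg'), natTrailingDegree_mul hf' hg']
  rfl

theorem zdGraph_adj_iff (u v : zd p c) :
    (zdGraph p c).Adj u v ↔ u ≠ v ∧ c ≤ mindeg (u : TPR p c) + mindeg (v : TPR p c) :=
  and_congr_right fun _ => mul_eq_zero_iff_le_mindeg_add u.2.1 v.2.1

theorem nat_card_degreeLT (n : ℕ) : Nat.card (degreeLT (ZMod p) n) = p ^ n := by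
  rw [Nat.card_congr (degreeLTEquiv (ZMod p) n).toEquiv, Nat.card_fun, Nat.card_zmod,
    Nat.card_eq_fintype_card, Fintype.card_fin]

theorem setOf_le_mindeg_eq_image {m : ℕ} (hm : m ≤ c) :
    {f : TPR p c | f ≠ 0 ∧ m ≤ mindeg f} =
      (fun q => AdjoinRoot.mk (X ^ c) (X ^ m * q)) ''
        ((degreeLT (ZMod p) (c - m) : Set (ZMod p)[X]) \ {0}) := by
  ext f
  constructor
  · rintro ⟨hf, hmf⟩
    have hf' : canon f ≠ 0 := mt canon_eq_zero_iff.mp hf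
    obtain ⟨q, hq⟩ := (X_pow_dvd_iff_le_natTrailingDegree hf' m).mpr hmf
    have hq0 : q ≠ 0 := by rintro rfl; exact hf' (by rw [hq, mul_zero])
    have hdeg : m + q.natDegree < c := by
      simpa [hq, natDegree_mul (pow_ne_zero m X_ne_zero) hq0] using natDegree_canon_lt hf
    refine ⟨q, ⟨mem_degreeLT.mpr ((natDegree_lt_iff_degree_lt hq0).mp (by omega)), hq0⟩, ?_⟩
    show AdjoinRoot.mk _ (X ^ m * q) = f
    rw [← hq, mk_canon]
  · rintro ⟨q, ⟨hq, hq0 : q ≠ 0⟩, rfl⟩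
    dsimp only
    have hcanon := canon_mk_of_degree_lt (degree_X_pow_mul_lt hm hq)
    have hXq : X ^ m * q ≠ 0 := mul_ne_zero (pow_ne_zero m X_ne_zero) hq0
    refine ⟨fun h => hXq (by rw [← hcanon, h, canon_eq_zero_iff]), ?_⟩
    rw [mindeg, hcanon, natTrailingDegree_mul (pow_ne_zero m X_ne_zero) hq0,
      natTrailingDegree_X_pow]
    omega

theorem ncard_setOf_le_mindeg_add_one {m : ℕ} (hm : m ≤ c) :
    {f : TPR p c | f ≠ 0 ∧ m ≤ mindeg f}.ncard + 1 = p ^ (c - m) := by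
  have hinj : Set.InjOn (fun q => AdjoinRoot.mk (X ^ c) (X ^ m * q) : _ → TPR p c)
      (degreeLT (ZMod p) (c - m)) := fun q₁ hq₁ q₂ hq₂ h => by
    have := congrArg canon h
    dsimp only at this
    rwa [canon_mk_of_degree_lt (degree_X_pow_mul_lt hm hq₁),
      canon_mk_of_degree_lt (degree_X_pow_mul_lt hm hq₂),
      mul_right_inj' (pow_ne_zero m X_ne_zero)] at this
  rw [setOf_le_mindeg_eq_image hm, (hinj.mono Set.sdiff_subset).ncard_image,
    Set.ncard_sdiff_singleton_of_mem (Submodule.zero_mem _), ← Nat.card_coe_set_eq]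
  rw [SetLike.coe_sort_coe, nat_card_degreeLT]
  exact Nat.sub_add_cancel (Nat.one_le_pow _ _ (Fact.out : p.Prime).pos)

end TruncatedPolynomial

section ZeroDivisorGraph

variable {p c : ℕ} [Fact p.Prime]

theorem image_val_neighborSet_zdGraph (u : zd p c) :
    Subtype.val '' (zdGraph p c).neighborSet u =
      {g : TPR p c | g ≠ 0 ∧ c - mindeg (u : TPR p c) ≤ mindeg g} \ {(u : TPR p c)} := by
  have hu := mindeg_lt u.2.1
  ext g
  constructor
  · rintro ⟨v, ⟨huv, hv⟩, rfl⟩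
    have := (mul_eq_zero_iff_le_mindeg_add u.2.1 v.2.1).mp hv
    exact ⟨⟨v.2.1, by omega⟩, fun h => huv (Subtype.ext h).symm⟩
  · rintro ⟨⟨hg, hug⟩, hgu⟩
    have hmul : (u : TPR p c) * g = 0 := (mul_eq_zero_iff_le_mindeg_add u.2.1 hg).mpr (by omega)
    refine ⟨⟨g, hg, u, u.2.1, by rw [mul_comm, hmul]⟩, ⟨fun h => hgu ?_, hmul⟩, rfl⟩
    exact (congrArg Subtype.val h).symm

-- Stated additively to avoid the truncated subtractions `p ^ i - 1` and `p ^ i - 2`.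
theorem ncard_neighborSet_zdGraph_add (u : zd p c) :
    ((zdGraph p c).neighborSet u).ncard + (if c ≤ 2 * mindeg (u : TPR p c) then 2 else 1) =
      p ^ mindeg (u : TPR p c) := by
  have hu := mindeg_lt u.2.1
  have hcard := ncard_setOf_le_mindeg_add_one (p := p) (Nat.sub_le c (mindeg (u : TPR p c)))
  rw [Nat.sub_sub_self hu.le] at hcard
  rw [← Set.ncard_image_of_injective _ Subtype.val_injective, image_val_neighborSet_zdGraph,
    ← hcard]
  split_ifs with h
  · have hmem : (u : TPR p c) ∈
        {g : TPR p c | g ≠ 0 ∧ c - mindeg (u : TPR p c) ≤ mindeg g} := ⟨u.2.1, by omega⟩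
    rw [← Set.ncard_sdiff_singleton_add_one hmem]
  · rw [Set.sdiff_singleton_eq_self fun hu' => h (by have := hu'.2; omega)]

theorem smul_degM_add_smul_adjM_mulVec (α : ℝ) {i : ℕ} {x : zd p c → ℝ}
    (hsupp : ∀ v : zd p c, x v ≠ 0 → mindeg (v : TPR p c) = i)
    (hsum : ∑ v ∈ Finset.univ.filter (fun v : zd p c => mindeg (v : TPR p c) = i), x v = 0) :
    (α • degM p c + (1 - α) • adjM p c).mulVec x =
      (α * ((p : ℝ) ^ i - 1) - if c ≤ 2 * i then 1 else 0) • x := by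
  classical
  funext u
  have hadj : (adjM p c).mulVec x u = if c ≤ mindeg (u : TPR p c) + i then -x u else 0 :=
    (zdGraph p c).adjMatrix_mulVec_apply_eq_ite_of_adj_iff (fun v => mindeg (v : TPR p c))
      (fun a b => c ≤ a + b) zdGraph_adj_iff hsupp hsum u
  simp only [Matrix.add_mulVec, Matrix.smul_mulVec, Pi.add_apply, Pi.smul_apply, smul_eq_mul,
    degM, Matrix.mulVec_diagonal, hadj]
  by_cases hxu : x u = 0
  · simp [hxu]
  obtain rfl := hsupp u hxu
  rw [← two_mul]
  have hdeg := congrArg (Nat.cast : ℕ → ℝ) (ncard_neighborSet_zdGraph_add u)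
  push_cast at hdeg
  split_ifs at hdeg ⊢ <;> linear_combination α * x u * hdeg

end ZeroDivisorGraph

open scoped Classical in
theorem stmt_16_general (p b : ℕ) [Fact p.Prime]
    (α : ℝ) (i : ℕ)
    (x : zd p (2 * b + 1) → ℝ)
    (hsupp : ∀ v : zd p (2 * b + 1), x v ≠ 0 → mindeg (v : TPR p (2 * b + 1)) = i)
    (hsum : ∑ v ∈ Finset.univ.filter
        (fun v : zd p (2 * b + 1) => mindeg (v : TPR p (2 * b + 1)) = i), x v = 0) :
    (1 ≤ i → i ≤ b →
      (α • degM p (2 * b + 1) + (1 - α) • adjM p (2 * b + 1)).mulVec x =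
        (α * ((p : ℝ) ^ i - 1)) • x) ∧
    (b + 1 ≤ i → i ≤ 2 * b →
      (α • degM p (2 * b + 1) + (1 - α) • adjM p (2 * b + 1)).mulVec x =
        (α * ((p : ℝ) ^ i - 1) - 1) • x) := by
  rw [smul_degM_add_smul_adjM_mulVec α hsupp hsum]
  refine ⟨fun _ hib => ?_, fun hbi _ => ?_⟩
  · rw [if_neg (by omega), sub_zero]
  · rw [if_pos (by omega)]

open scoped Classical in
/-- For `G = Γ(𝔽_p[x]/(x^(2b+1)))` and `0 ≤ α ≤ 1`, vectors supported on `V_i`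
with coordinate sum zero are eigenvectors of `A_α(G) = αD(G) + (1-α)A(G)`, with
eigenvalue `α(p^i - 1)` for `1 ≤ i ≤ b` and `α(p^i - 1) - 1` for `b+1 ≤ i ≤ 2b`. -/
theorem stmt_16 (p b : ℕ) [Fact p.Prime] (hb : 1 ≤ b)
    (α : ℝ) (hα0 : 0 ≤ α) (hα1 : α ≤ 1) (i : ℕ)
    (x : zd p (2 * b + 1) → ℝ)
    (hsupp : ∀ v : zd p (2 * b + 1), x v ≠ 0 → mindeg (v : TPR p (2 * b + 1)) = i)
    (hsum : ∑ v ∈ Finset.univ.filter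
        (fun v : zd p (2 * b + 1) => mindeg (v : TPR p (2 * b + 1)) = i), x v = 0) :
    (1 ≤ i → i ≤ b →
      (α • degM p (2 * b + 1) + (1 - α) • adjM p (2 * b + 1)).mulVec x =
        (α * ((p : ℝ) ^ i - 1)) • x) ∧
    (b + 1 ≤ i → i ≤ 2 * b →
      (α • degM p (2 * b + 1) + (1 - α) • adjM p (2 * b + 1)).mulVec x =
        (α * ((p : ℝ) ^ i - 1) - 1) • x) :=
  stmt_16_general p b α i x hsupp hsum
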